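/- Let (r_1,...,r_n) be a regular sequence in a commutative ring R generating the ideal I. Then the associated graded algebra gr_I^*(R) = ⊕_{s≥0} I^s/I^{s+1} is isomorphic as a graded R/I-algebra to the symmetric algebra Sym_{R/I}^*(I/I²). -/

import Mathlib

/-!
Regular sequences are quasi-regular, by induction along the sequence. Let `r'` be quasi-regular,
generating `J`, and let `x` be regular on `R ⧸ J`. Then `x` is regular on every `R ⧸ J ^ c`:
if `x * y ∈ J ^ (c + 1)` with `y = K(r') ∈ J ^ c`, then `x • K` is a form of degree `c` whose
value lies in `J ^ (c + 1)`, so the coefficients of `K` lie in `J`. Now let `F = X * H + G(X')`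
be a form of degree `d + 1` vanishing at `r = (r', x)`. Then `x * H(r) ∈ J ^ (d + 1)`, hence
`H(r) ∈ J ^ (d + 1)` and `H ≡ 0` modulo `I` by induction on the degree; writing
`H(r) = H'(r')`, the form `G + x • H'` vanishes at `r'`, so `G ≡ 0` modulo `I` as well.
A form whose value lies only in `I ^ (d + 2)` differs from a vanishing one by a form with
coefficients in `I`.
-/

open MvPolynomial

namespace MvPolynomial

variable {R σ τ : Type*} [CommRing R]

theorem prod_pow_mem_pow_weight_one {p : σ → R} {B : Ideal R} (hp : ∀ i, p i ∈ B) (d : σ →₀ ℕ) :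
    (d.prod fun i k => p i ^ k) ∈ B ^ Finsupp.weight 1 d := by
  simp only [Finsupp.weight_apply, Pi.one_apply, smul_eq_mul, mul_one, Finsupp.sum,
    ← Finset.prod_pow_eq_pow_sum]
  exact Ideal.prod_mem_prod fun i _ => Ideal.pow_mem_pow (hp i) _

theorem eval_mem_mul_pow_of_isHomogeneous {p : σ → R} {A B : Ideal R} (hp : ∀ i, p i ∈ B)
    {F : MvPolynomial σ R} {t : ℕ} (hF : F.IsHomogeneous t) (hFA : F ∈ Ideal.map C A) :
    eval p F ∈ A * B ^ t := by
  rw [F.as_sum, map_sum]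
  refine Ideal.sum_mem _ fun d hd => ?_
  rw [eval_monomial, ← hF (mem_support_iff.mp hd)]
  exact Ideal.mul_mem_mul (mem_map_C_iff.mp hFA d) (prod_pow_mem_pow_weight_one hp d)

theorem eval_mem_pow_of_isHomogeneous {p : σ → R} {B : Ideal R} (hp : ∀ i, p i ∈ B)
    {F : MvPolynomial σ R} {t : ℕ} (hF : F.IsHomogeneous t) : eval p F ∈ B ^ t := by
  simpa using eval_mem_mul_pow_of_isHomogeneous (A := ⊤) hp hF (by simp [Ideal.map_top])

theorem exists_isHomogeneous_eval_eq_of_mem_span {p : σ → R} {x : R}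
    (hx : x ∈ Ideal.span (Set.range p)) :
    ∃ L : MvPolynomial σ R, L.IsHomogeneous 1 ∧ eval p L = x := by
  obtain ⟨c, rfl⟩ := Finsupp.mem_span_range_iff_exists_finsupp.mp hx
  refine ⟨c.sum fun i a => C a * X i, IsHomogeneous.sum _ _ _ fun i _ => ?_, ?_⟩
  · exact isHomogeneous_C_mul_X _ _
  · simp [Finsupp.sum, map_sum]

theorem exists_isHomogeneous_eval_eq_of_mem_mul_pow (p : σ → R) {A : Ideal R} {s : ℕ} {x : R}
    (hx : x ∈ A * Ideal.span (Set.range p) ^ s) :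
    ∃ F : MvPolynomial σ R, F.IsHomogeneous s ∧ F ∈ Ideal.map C A ∧ eval p F = x := by
  induction s generalizing x with
  | zero =>
    rw [pow_zero, mul_one] at hx
    exact ⟨C x, isHomogeneous_C _ _, Ideal.mem_map_of_mem _ hx, eval_C _⟩
  | succ s ih =>
    rw [pow_succ, ← mul_assoc] at hx
    refine Submodule.mul_induction_on hx (fun a ha b hb => ?_) ?_
    · obtain ⟨F, hF, hFA, rfl⟩ := ih ha
      obtain ⟨L, hL, rfl⟩ := exists_isHomogeneous_eval_eq_of_mem_span hb
      exact ⟨F * L, hF.mul hL, Ideal.mul_mem_right _ _ hFA, eval_mul⟩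
    · rintro _ _ ⟨F, hF, hFA, rfl⟩ ⟨G, hG, hGA, rfl⟩
      exact ⟨F + G, hF.add hG, add_mem hFA hGA, map_add _ _ _⟩

theorem exists_isHomogeneous_eval_eq_of_mem_pow (p : σ → R) {s : ℕ} {x : R}
    (hx : x ∈ Ideal.span (Set.range p) ^ s) :
    ∃ F : MvPolynomial σ R, F.IsHomogeneous s ∧ eval p F = x := by
  obtain ⟨F, hF, -, hFx⟩ := exists_isHomogeneous_eval_eq_of_mem_mul_pow p (A := ⊤) (by simpa)
  exact ⟨F, hF, hFx⟩

theorem mem_map_C_of_isHomogeneous_zero {A : Ideal R} (p : σ → R) {F : MvPolynomial σ R}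
    (hF : F.IsHomogeneous 0) (hFA : eval p F ∈ A) : F ∈ Ideal.map C A := by
  rw [← totalDegree_zero_iff_isHomogeneous, totalDegree_eq_zero_iff_eq_C] at hF
  rw [hF, eval_C] at hFA
  rw [hF]
  exact Ideal.mem_map_of_mem _ hFA

theorem rename_mem_map_C {A : Ideal R} (e : τ → σ) {G : MvPolynomial τ R}
    (hG : G ∈ Ideal.map C A) : rename e G ∈ Ideal.map C A := by
  have := Ideal.mem_map_of_mem (rename e : MvPolynomial τ R →ₐ[R] _).toRingHom hG
  rwa [Ideal.map_map, show (rename e).toRingHom.comp C = (C : R →+* MvPolynomial σ R) from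
    RingHom.ext (rename_C e)] at this

theorem IsHomogeneous.divMonomial_single {F : MvPolynomial σ R} {d : ℕ}
    (hF : F.IsHomogeneous (d + 1)) (i : σ) :
    (F.divMonomial (Finsupp.single i 1)).IsHomogeneous d := by
  intro m hm
  rw [coeff_divMonomial] at hm
  have := hF hm
  rw [map_add, Finsupp.weight_single, Pi.one_apply, smul_eq_mul, mul_one] at this
  omega

theorem IsHomogeneous.modMonomial {F : MvPolynomial σ R} {d : ℕ} (hF : F.IsHomogeneous d)
    (s : σ →₀ ℕ) : (F.modMonomial s).IsHomogeneous d := by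
  intro m hm
  by_cases h : s ≤ m
  · exact absurd (coeff_modMonomial_of_le _ h) hm
  · rw [coeff_modMonomial_of_not_le _ h] at hm
    exact hF hm

theorem notMem_vars_modMonomial_single (F : MvPolynomial σ R) (i : σ) :
    i ∉ (F.modMonomial (Finsupp.single i 1)).vars := by
  rw [mem_vars_iff_mem_support]
  rintro ⟨m, hm, hi⟩
  refine mem_support_iff.mp hm (coeff_modMonomial_of_le _ ?_)
  rw [Finsupp.single_le_iff]
  exact Nat.one_le_iff_ne_zero.mpr (Finsupp.mem_support_iff.mp hi)

theorem IsHomogeneous.exists_eq_X_mul_add_rename {F : MvPolynomial σ R} {d : ℕ}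
    (hF : F.IsHomogeneous (d + 1)) {i : σ} {e : τ → σ} (he : Function.Injective e)
    (hi : {i}ᶜ ⊆ Set.range e) :
    ∃ H G, H.IsHomogeneous d ∧ G.IsHomogeneous (d + 1) ∧ F = X i * H + rename e G := by
  obtain ⟨G, hG⟩ := exists_rename_eq_of_vars_subset_range _ e he fun j hj =>
    hi (ne_of_mem_of_not_mem hj (notMem_vars_modMonomial_single F i))
  refine ⟨_, G, hF.divMonomial_single i, ?_, ?_⟩
  · rw [← IsHomogeneous.rename_isHomogeneous_iff he, hG]
    exact hF.modMonomial _
  · rw [hG, divMonomial_add_modMonomial_single]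

end MvPolynomial

theorem Ideal.ofList_ofFn {R : Type*} [CommRing R] {n : ℕ} (r : Fin n → R) :
    Ideal.ofList (List.ofFn r) = Ideal.span (Set.range r) := by
  simp only [Ideal.ofList, List.mem_ofFn', Set.ofPred_mem_eq]

namespace RingTheory.Sequence

variable {R σ τ : Type*} [CommRing R]

/-- Quasi-regularity in the sense of Matsumura, §16: the canonical map `(R ⧸ I)[X] → gr_I R`,
`X j ↦ p j`, is injective, where `I` is the ideal spanned by `p`. -/
def IsQuasiRegular (p : σ → R) : Prop :=
  ∀ (s : ℕ) (F : MvPolynomial σ R), F.IsHomogeneous s →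
    eval p F ∈ Ideal.span (Set.range p) ^ (s + 1) → F ∈ Ideal.map C (Ideal.span (Set.range p))

theorem isQuasiRegular_of_isEmpty [IsEmpty σ] (p : σ → R) : IsQuasiRegular p := by
  intro s F _ hF
  obtain ⟨c, rfl⟩ := C_surjective σ F
  rw [Set.range_eq_empty, Ideal.span_empty, ← Ideal.zero_eq_bot, zero_pow s.succ_ne_zero,
    eval_C, Ideal.zero_eq_bot, Ideal.mem_bot] at hF
  rw [hF, C_0]
  exact zero_mem _

theorem mem_map_C_of_eval_mem_pow_succ {p : σ → R} {s : ℕ}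
    (h : ∀ F : MvPolynomial σ R, F.IsHomogeneous s → eval p F = 0 →
      F ∈ Ideal.map C (Ideal.span (Set.range p)))
    {F : MvPolynomial σ R} (hF : F.IsHomogeneous s)
    (hFp : eval p F ∈ Ideal.span (Set.range p) ^ (s + 1)) :
    F ∈ Ideal.map C (Ideal.span (Set.range p)) := by
  rw [pow_succ'] at hFp
  obtain ⟨G, hG, hGI, hGF⟩ := exists_isHomogeneous_eval_eq_of_mem_mul_pow p hFp
  have hFG := h (F - G) (hF.sub hG) (by rw [map_sub, hGF, sub_self])
  simpa using add_mem hFG hGI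

theorem IsQuasiRegular.isSMulRegular_quotient_pow {p : σ → R} (hp : IsQuasiRegular p) {x : R}
    (hx : IsSMulRegular (R ⧸ Ideal.span (Set.range p)) x) (c : ℕ) :
    IsSMulRegular (R ⧸ Ideal.span (Set.range p) ^ c) x := by
  set J := Ideal.span (Set.range p)
  rw [isSMulRegular_quotient_iff_mem_of_smul_mem] at hx ⊢
  induction c with
  | zero => simp
  | succ c ih =>
    intro y hy
    obtain ⟨K, hK, rfl⟩ :=
      exists_isHomogeneous_eval_eq_of_mem_pow p (ih _ (Ideal.pow_le_pow_right c.le_succ hy))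
    have hxK : C x * K ∈ Ideal.map C J := by
      refine hp c _ (by simpa using (isHomogeneous_C σ x).mul hK) ?_
      rwa [eval_mul, eval_C]
    have hKJ : K ∈ Ideal.map C J := by
      rw [mem_map_C_iff] at hxK ⊢
      exact fun m => hx _ (by simpa [coeff_C_mul] using hxK m)
    rw [pow_succ']
    exact eval_mem_mul_pow_of_isHomogeneous (fun i => Ideal.subset_span (Set.mem_range_self i))
      hK hKJ

theorem IsQuasiRegular.of_comp {p : σ → R} {i : σ} {e : τ → σ} (he : Function.Injective e)
    (hi : {i}ᶜ ⊆ Set.range e) (hpe : IsQuasiRegular (p ∘ e))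
    (hreg : IsSMulRegular (R ⧸ Ideal.span (Set.range (p ∘ e))) (p i)) : IsQuasiRegular p := by
  set I := Ideal.span (Set.range p)
  set J := Ideal.span (Set.range (p ∘ e))
  have hJI : J ≤ I := Ideal.span_mono (Set.range_comp_subset_range e p)
  have hpiI : p i ∈ I := Ideal.subset_span ⟨i, rfl⟩
  intro s
  induction s with
  | zero => exact fun F hF hFp => mem_map_C_of_isHomogeneous_zero p hF (by simpa using hFp)
  | succ d ih =>
    refine fun F hF => mem_map_C_of_eval_mem_pow_succ (fun F hF hF0 => ?_) hF
    obtain ⟨H, G, hH, hG, rfl⟩ := hF.exists_eq_X_mul_add_rename he hi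
    rw [map_add, eval_mul, eval_X, eval_rename] at hF0
    have hGJ : eval (p ∘ e) G ∈ J ^ (d + 1) :=
      eval_mem_pow_of_isHomogeneous (fun j => Ideal.subset_span (Set.mem_range_self j)) hG
    have hHJ : eval p H ∈ J ^ (d + 1) := by
      refine (isSMulRegular_quotient_iff_mem_of_smul_mem _ _).mp
        (hpe.isSMulRegular_quotient_pow hreg (d + 1)) _ ?_
      rw [smul_eq_mul, eq_neg_of_add_eq_zero_left hF0]
      exact neg_mem hGJ
    have hHI : H ∈ Ideal.map C I := ih H hH (Ideal.pow_right_mono hJI _ hHJ)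
    obtain ⟨H', hH', hH'H⟩ := exists_isHomogeneous_eval_eq_of_mem_pow (p ∘ e) hHJ
    have hGH' : G + C (p i) * H' ∈ Ideal.map C J := by
      refine hpe _ _ (hG.add (by simpa using (isHomogeneous_C τ (p i)).mul hH')) ?_
      rw [map_add, eval_mul, eval_C, hH'H, add_comm (eval (p ∘ e) G), hF0]
      exact zero_mem _
    have hGI : G ∈ Ideal.map C I := by
      rw [← add_sub_cancel_right G (C (p i) * H')]
      exact sub_mem (Ideal.map_mono hJI hGH')
        (Ideal.mul_mem_right _ _ (Ideal.mem_map_of_mem _ hpiI))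
    exact add_mem (Ideal.mul_mem_left _ _ hHI) (rename_mem_map_C e hGI)

theorem isQuasiRegular_of_isWeaklyRegular :
    ∀ {n : ℕ} (r : Fin n → R), IsWeaklyRegular R (List.ofFn r) → IsQuasiRegular r
  | 0, r, _ => isQuasiRegular_of_isEmpty r
  | n + 1, r, hr => by
    rw [List.ofFn_succ', List.concat_eq_append, isWeaklyRegular_append_iff,
      isWeaklyRegular_singleton_iff, Ideal.smul_eq_mul, Ideal.mul_top, Ideal.ofList_ofFn] at hr
    exact (isQuasiRegular_of_isWeaklyRegular _ hr.1).of_comp (Fin.castSucc_injective n)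
      (fun j hj => Fin.exists_castSucc_eq.mpr hj) hr.2

end RingTheory.Sequence

/-- The two clauses say that the graded map `(R ⧸ I)[X₁, …, Xₙ] → gr_I R`, `Xⱼ ↦ rⱼ + I²`, is
bijective in each degree; in degree one this makes `I ⧸ I²` free on the classes of the `rⱼ`, so
that `(R ⧸ I)[X₁, …, Xₙ] ≅ Sym_{R/I}(I ⧸ I²)`. -/
theorem associated_graded_iso_symmetric_algebra
    (R : Type u) [CommRing R] (n : ℕ) (r : Fin n → R)
    (hreg : RingTheory.Sequence.IsRegular R (List.ofFn r))
    (I : Ideal R) (hI : I = Ideal.span (Set.range r)) :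
    -- injectivity (quasi-regularity)
    (∀ (s : ℕ) (F : MvPolynomial (Fin n) R), F.IsHomogeneous s →
      MvPolynomial.eval r F ∈ I ^ (s + 1) → ∀ m, MvPolynomial.coeff m F ∈ I) ∧
    -- surjectivity: every element of `I^s` is the value of a homogeneous degree-`s` form
    (∀ (s : ℕ) (x : R), x ∈ I ^ s →
      ∃ F : MvPolynomial (Fin n) R, F.IsHomogeneous s ∧ MvPolynomial.eval r F = x) := by
  subst hI
  have hquasi := RingTheory.Sequence.isQuasiRegular_of_isWeaklyRegular r hreg.toIsWeaklyRegular
  exact ⟨fun s F hF hFr => mem_map_C_iff.mp (hquasi s F hF hFr),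
    fun s x hx => exists_isHomogeneous_eval_eq_of_mem_pow r hx⟩
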